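/- If for every atom a in the disagreement set ds π π' we have ∇ ⊢ a # t, then ∇ ⊢ π • t ≈ π' • t; and conversely, if ∇ ⊢ π • t ≈ π' • t then ∇ ⊢ a # t for every a ∈ ds π π'. -/

import Mathlib

abbrev Atom := ℕ
abbrev Var := ℕ
abbrev Perm := List (Atom × Atom)

def swap (p : Atom × Atom) (a : Atom) : Atom :=
  if a = p.1 then p.2 else if a = p.2 then p.1 else a

def permAtom : Perm → Atom → Atom
  | [], a => a
  | p :: π, a => swap p (permAtom π a)

def ds (π π' : Perm) : Set Atom := {a | permAtom π a ≠ permAtom π' a}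

inductive Trm : Type
  | unit : Trm
  | pair : Trm → Trm → Trm
  | fn : ℕ → Trm → Trm
  | atom : Atom → Trm
  | abs : Atom → Trm → Trm
  | susp : Perm → Var → Trm

def permTrm (π : Perm) : Trm → Trm
  | .unit => .unit
  | .pair t₁ t₂ => .pair (permTrm π t₁) (permTrm π t₂)
  | .fn f t => .fn f (permTrm π t)
  | .atom a => .atom (permAtom π a)
  | .abs a t => .abs (permAtom π a) (permTrm π t)
  | .susp π' X => .susp (π ++ π') X

abbrev Env := Set (Atom × Var)

inductive fresh (Γ : Env) (a : Atom) : Trm → Prop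
  | unit : fresh Γ a .unit
  | pair {t₁ t₂} : fresh Γ a t₁ → fresh Γ a t₂ → fresh Γ a (.pair t₁ t₂)
  | fn {f t} : fresh Γ a t → fresh Γ a (.fn f t)
  | abs₁ {t} : fresh Γ a (.abs a t)
  | abs₂ {b t} : a ≠ b → fresh Γ a t → fresh Γ a (.abs b t)
  | atom {b} : a ≠ b → fresh Γ a (.atom b)
  | susp {π X} : (permAtom π.reverse a, X) ∈ Γ → fresh Γ a (.susp π X)

inductive equ (Γ : Env) : Trm → Trm → Prop
  | unit : equ Γ .unit .unit
  | pair {t₁ t₂ s₁ s₂} : equ Γ t₁ t₂ → equ Γ s₁ s₂ → equ Γ (.pair t₁ s₁) (.pair t₂ s₂)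
  | fn {f t₁ t₂} : equ Γ t₁ t₂ → equ Γ (.fn f t₁) (.fn f t₂)
  | abs₁ {a t₁ t₂} : equ Γ t₁ t₂ → equ Γ (.abs a t₁) (.abs a t₂)
  | abs₂ {a b t₁ t₂} : a ≠ b → fresh Γ a t₂ → equ Γ t₁ (permTrm [(a, b)] t₂) →
      equ Γ (.abs a t₁) (.abs b t₂)
  | atom {a} : equ Γ (.atom a) (.atom a)
  | susp {π π' X} : (∀ c ∈ ds π π', (c, X) ∈ Γ) → equ Γ (.susp π X) (.susp π' X)

inductive weak : Trm → Trm → Prop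
  | unit : weak .unit .unit
  | atom {a} : weak (.atom a) (.atom a)
  | fn {f t t'} : weak t t' → weak (.fn f t) (.fn f t')
  | pair {t₁ t₂ s₁ s₂} : weak t₁ s₁ → weak t₂ s₂ → weak (.pair t₁ t₂) (.pair s₁ s₂)
  | abs {a t t'} : weak t t' → weak (.abs a t) (.abs a t')
  | susp {π π' X} : ds π π' = ∅ → weak (.susp π X) (.susp π' X)

def subst (σ : Var → Option Trm) : Trm → Trm
  | .unit => .unit
  | .pair t₁ t₂ => .pair (subst σ t₁) (subst σ t₂)
  | .fn f t => .fn f (subst σ t)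
  | .atom a => .atom a
  | .abs a t => .abs a (subst σ t)
  | .susp π X =>
      match σ X with
      | some t => permTrm π t
      | none => .susp π X

/-!
Induction on `t`, for all `π π'` at once. The only interesting case is an abstraction `a.t` with
`π a ≠ π' a`: the different-binder rule asks for freshness of `π a` in `π' • t`, i.e. of
`b := π'⁻¹ (π a)` in `t`, and for `π • t ≈ ((π a, π' a) :: π') • t`, whose disagreement set
lies between `ds π π' \ {a, b}` and `ds π π' \ {a}`.
-/

lemma swap_swap (p : Atom × Atom) (a : Atom) : swap p (swap p a) = a := by
  unfold swap; split_ifs <;> simp_all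

lemma swap_snd (p : Atom × Atom) : swap p p.2 = p.1 := by
  unfold swap; split_ifs <;> simp_all

lemma swap_of_ne {p : Atom × Atom} {a : Atom} (h₁ : a ≠ p.1) (h₂ : a ≠ p.2) : swap p a = a := by
  simp [swap, h₁, h₂]

lemma permAtom_append (π π' : Perm) (a : Atom) :
    permAtom (π ++ π') a = permAtom π (permAtom π' a) := by
  induction π with
  | nil => rfl
  | cons p π ih => simp [permAtom, ih]

@[simp]
lemma permAtom_reverse_permAtom (π : Perm) (a : Atom) :
    permAtom π.reverse (permAtom π a) = a := by
  induction π with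
  | nil => rfl
  | cons p π ih => simp [permAtom, permAtom_append, swap_swap, ih]

@[simp]
lemma permAtom_permAtom_reverse (π : Perm) (a : Atom) :
    permAtom π (permAtom π.reverse a) = a := by
  simpa using permAtom_reverse_permAtom π.reverse a

lemma permAtom_injective (π : Perm) : Function.Injective (permAtom π) :=
  Function.LeftInverse.injective (permAtom_reverse_permAtom π)

lemma permTrm_append (π π' : Perm) (t : Trm) :
    permTrm π (permTrm π' t) = permTrm (π ++ π') t := by
  induction t with
  | unit => rfl
  | pair t₁ t₂ ih₁ ih₂ => simp [permTrm, ih₁, ih₂]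
  | fn f t ih => simp [permTrm, ih]
  | atom a => simp [permTrm, permAtom_append]
  | abs a t ih => simp [permTrm, permAtom_append, ih]
  | susp ρ X => simp [permTrm]

lemma mem_ds_append_right {π π' ρ : Perm} {a : Atom} :
    a ∈ ds (π ++ ρ) (π' ++ ρ) ↔ permAtom ρ a ∈ ds π π' := by
  simp [ds, permAtom_append]

lemma forall_mem_ds_ne_iff {π π' : Perm} {a : Atom} (ha : a ∈ ds π π') (P : Atom → Prop) :
    (∀ x ∈ ds π π', x ≠ a → P x) ↔
      P (permAtom π'.reverse (permAtom π a)) ∧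
        ∀ x ∈ ds π ((permAtom π a, permAtom π' a) :: π'), P x := by
  set b := permAtom π'.reverse (permAtom π a)
  have hb : permAtom π' b = permAtom π a := permAtom_permAtom_reverse π' _
  have hba : b ≠ a := fun h => ha (h ▸ hb).symm
  have hb_mem : b ∈ ds π π' := fun h => hba (permAtom_injective π (h.trans hb))
  have fixed {x} (hxa : x ≠ a) (hxb : x ≠ b) :
      permAtom ((permAtom π a, permAtom π' a) :: π') x = permAtom π' x :=
    swap_of_ne (fun h => hxb (permAtom_injective π' (h.trans hb.symm)))
      (fun h => hxa (permAtom_injective π' h))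
  constructor
  · refine fun h => ⟨h b hb_mem hba, fun x hx => ?_⟩
    have hxa : x ≠ a := by
      rintro rfl
      exact hx (swap_snd (permAtom π x, permAtom π' x)).symm
    by_cases hxb : x = b
    · exact hxb ▸ h b hb_mem hba
    · exact h x (fun h => hx (h.trans (fixed hxa hxb).symm)) hxa
  · rintro ⟨hPb, hP⟩ x hx hxa
    by_cases hxb : x = b
    · exact hxb ▸ hPb
    · exact hP x fun h => hx (h.trans (fixed hxa hxb))

section Inversion

variable {Γ : Env} {a b : Atom} {t t₁ t₂ s₁ s₂ : Trm}

lemma fresh_pair_iff : fresh Γ a (.pair t₁ t₂) ↔ fresh Γ a t₁ ∧ fresh Γ a t₂ :=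
  ⟨fun | .pair h₁ h₂ => ⟨h₁, h₂⟩, fun ⟨h₁, h₂⟩ => .pair h₁ h₂⟩

lemma fresh_fn_iff {f : ℕ} : fresh Γ a (.fn f t) ↔ fresh Γ a t :=
  ⟨fun | .fn h => h, .fn⟩

lemma fresh_atom_iff : fresh Γ a (.atom b) ↔ a ≠ b :=
  ⟨fun | .atom h => h, .atom⟩

lemma fresh_abs_iff : fresh Γ a (.abs b t) ↔ a = b ∨ fresh Γ a t :=
  ⟨fun | .abs₁ => .inl rfl | .abs₂ _ h => .inr h,
   fun h => if hab : a = b then hab ▸ .abs₁ else .abs₂ hab (h.resolve_left hab)⟩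

lemma fresh_susp_iff {π : Perm} {X : Var} :
    fresh Γ a (.susp π X) ↔ (permAtom π.reverse a, X) ∈ Γ :=
  ⟨fun | .susp h => h, .susp⟩

lemma equ_pair_iff : equ Γ (.pair t₁ s₁) (.pair t₂ s₂) ↔ equ Γ t₁ t₂ ∧ equ Γ s₁ s₂ :=
  ⟨fun | .pair h₁ h₂ => ⟨h₁, h₂⟩, fun ⟨h₁, h₂⟩ => .pair h₁ h₂⟩

lemma equ_fn_iff {f : ℕ} : equ Γ (.fn f t₁) (.fn f t₂) ↔ equ Γ t₁ t₂ :=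
  ⟨fun | .fn h => h, .fn⟩

lemma equ_atom_iff : equ Γ (.atom a) (.atom b) ↔ a = b :=
  ⟨fun | .atom => rfl, fun h => h ▸ .atom⟩

lemma equ_abs_iff : equ Γ (.abs a t₁) (.abs b t₂) ↔
    a = b ∧ equ Γ t₁ t₂ ∨ a ≠ b ∧ fresh Γ a t₂ ∧ equ Γ t₁ (permTrm [(a, b)] t₂) :=
  ⟨fun | .abs₁ h => .inl ⟨rfl, h⟩ | .abs₂ hab ha h => .inr ⟨hab, ha, h⟩,
   fun | .inl ⟨hab, h⟩ => hab ▸ .abs₁ h | .inr ⟨hab, ha, h⟩ => .abs₂ hab ha h⟩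

lemma equ_susp_iff {π π' : Perm} {X : Var} :
    equ Γ (.susp π X) (.susp π' X) ↔ ∀ c ∈ ds π π', (c, X) ∈ Γ :=
  ⟨fun | .susp h => h, .susp⟩

end Inversion

lemma fresh_permTrm_iff {Γ : Env} {a : Atom} (π : Perm) (t : Trm) :
    fresh Γ (permAtom π a) (permTrm π t) ↔ fresh Γ a t := by
  induction t generalizing a with
  | unit => exact ⟨fun _ => .unit, fun _ => .unit⟩
  | pair t₁ t₂ ih₁ ih₂ => simp only [permTrm, fresh_pair_iff, ih₁, ih₂]
  | fn f t ih => simp only [permTrm, fresh_fn_iff, ih]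
  | atom b => simp only [permTrm, fresh_atom_iff, (permAtom_injective π).ne_iff]
  | abs b t ih => simp only [permTrm, fresh_abs_iff, (permAtom_injective π).eq_iff, ih]
  | susp ρ X => simp [permTrm, fresh_susp_iff, List.reverse_append, permAtom_append]

lemma forall_fresh_susp_iff_equ {Γ : Env} (π π' ρ : Perm) (X : Var) :
    (∀ a ∈ ds π π', fresh Γ a (.susp ρ X)) ↔
      equ Γ (permTrm π (.susp ρ X)) (permTrm π' (.susp ρ X)) := by
  simp only [permTrm, fresh_susp_iff, equ_susp_iff, mem_ds_append_right]
  exact ⟨fun h c hc => by simpa using h _ hc,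
    fun h a ha => h _ (by rwa [permAtom_permAtom_reverse])⟩

lemma forall_fresh_abs_iff_equ {Γ : Env} {a : Atom} {t : Trm}
    (ih : ∀ π π' : Perm, (∀ x ∈ ds π π', fresh Γ x t) ↔ equ Γ (permTrm π t) (permTrm π' t))
    (π π' : Perm) :
    (∀ x ∈ ds π π', fresh Γ x (.abs a t)) ↔
      equ Γ (permTrm π (.abs a t)) (permTrm π' (.abs a t)) := by
  by_cases ha : a ∈ ds π π'
  · have hne : permAtom π a ≠ permAtom π' a := ha
    have hfresh := fresh_permTrm_iff (Γ := Γ) (a := permAtom π'.reverse (permAtom π a)) π' t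
    rw [permAtom_permAtom_reverse] at hfresh
    simp only [permTrm, fresh_abs_iff, equ_abs_iff, hne, false_and, false_or, ne_eq,
      not_false_eq_true, true_and]
    rw [hfresh, permTrm_append, List.singleton_append, ← ih,
      ← forall_mem_ds_ne_iff ha (fresh Γ · t)]
    exact forall₂_congr fun x _ => or_iff_not_imp_left
  · have hab : permAtom π a = permAtom π' a := not_not.mp ha
    simp only [permTrm, fresh_abs_iff, equ_abs_iff, hab, true_and, ne_eq, not_true_eq_false,
      false_and, or_false, ← ih]
    exact forall₂_congr fun x hx => or_iff_right (ne_of_mem_of_not_mem hx ha)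

theorem ds_fresh_equ (Γ : Env) (π π' : Perm) (t : Trm) :
    (∀ a ∈ ds π π', fresh Γ a t) ↔ equ Γ (permTrm π t) (permTrm π' t) := by
  induction t generalizing π π' with
  | unit => exact ⟨fun _ => .unit, fun _ _ _ => .unit⟩
  | pair t₁ t₂ ih₁ ih₂ => simp only [permTrm, fresh_pair_iff, equ_pair_iff, forall₂_and, ih₁, ih₂]
  | fn f t ih => simp only [permTrm, fresh_fn_iff, equ_fn_iff, ih]
  | atom b =>
    simp only [permTrm, fresh_atom_iff, equ_atom_iff]
    exact ⟨fun h => not_not.mp fun hb => h b hb rfl, fun h a ha hab => ha (hab ▸ h)⟩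
  | abs a t ih => exact forall_fresh_abs_iff_equ ih π π'
  | susp ρ X => exact forall_fresh_susp_iff_equ π π' ρ X
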